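/- The reflection I : Cat → Preord, sending a small category to the preorder on its objects where x ≤ y iff there exists a morphism x → y, has stable units: I preserves every pullback of small categories in which the lower-right corner is a preorder (a category with at most one morphism between any two objects). -/

import Mathlib

open CategoryTheory Limits

universe u

/-- The objects of the preorder reflection of a category. -/
structure ThinObj (D : Type u) [Category.{u} D] : Type u where
  obj : D

instance (D : Type u) [Category.{u} D] : Preorder (ThinObj D) where
  le f g := Nonempty (f.obj ⟶ g.obj)
  le_refl f := ⟨𝟙 _⟩
  le_trans f g h u v := u.elim fun a => v.elim fun b => ⟨a ≫ b⟩

/-- The action of the preorder reflection on functors. -/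
def thinFunctor {C D : Type u} [Category.{u} C] [Category.{u} D] (F : C ⥤ D) :
    ThinObj C ⥤ ThinObj D where
  obj x := ⟨F.obj x.obj⟩
  map u := homOfLE (u.le.elim fun a => ⟨F.map a⟩)
  map_id _ := Subsingleton.elim _ _
  map_comp _ _ := Subsingleton.elim _ _

/-- The preorder reflection `I : Cat → Preord ⊆ Cat`, sending a small category to the
preorder on its objects with `x ≤ y` iff there exists a morphism `x ⟶ y`
(all parallel morphisms are identified). -/
def preordReflection : Cat.{u, u} ⥤ Cat.{u, u} where
  obj D := Cat.of (ThinObj D)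
  map F := (thinFunctor F.toFunctor).toCatHom
  map_id D := Cat.ext (CategoryTheory.Functor.ext (fun _ => rfl) (fun _ _ _ => @Subsingleton.elim _ (inferInstanceAs (Subsingleton (ULift (PLift _)))) _ _))
  map_comp F G := Cat.ext (CategoryTheory.Functor.ext (fun _ => rfl) (fun _ _ _ => @Subsingleton.elim _ (inferInstanceAs (Subsingleton (ULift (PLift _)))) _ _))

/-!
Since `Cat.objects` preserves limits, the objects of a pullback `P = A ×_X B` are exactly the
pairs `(a, b)` with `f a = g b`. When `X` is thin, a pair of arrows `a ⟶ a'`, `b ⟶ b'` between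
two such pairs automatically agrees in `X`, so the universal property applied to the walking arrow
yields an arrow between the corresponding objects of `P`. Hence `p ≤ q` in the preorder
reflection of `P` exactly when this holds in both components, which is the pullback of the
preorder reflections.
-/

lemma ThinObj.nonempty_hom_obj {D : Type u} [Category.{u} D] {x y : ThinObj D} (h : x ⟶ y) :
    Nonempty (x.obj ⟶ y.obj) :=
  h.le

instance (D : Cat.{u, u}) : Quiver.IsThin (preordReflection.obj D) :=
  inferInstanceAs (Quiver.IsThin (ThinObj D))

namespace CategoryTheory.Cat

lemma Hom.ext_of_isThin {C D : Cat.{u, u}} [Quiver.IsThin D] {F G : C ⟶ D}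
    (h : ∀ x, F.toFunctor.obj x = G.toFunctor.obj x) : F = G :=
  Cat.ext (Functor.ext h fun _ _ _ => Subsingleton.elim _ _)

def arrowHom {C : Cat.{u, u}} {c c' : C} (φ : c ⟶ c') : Cat.of (AsSmall.{u} (Fin 2)) ⟶ C :=
  (AsSmall.down ⋙ ComposableArrows.mk₁ φ).toCatHom

variable {P A B X : Cat.{u, u}} {fst : P ⟶ A} {snd : P ⟶ B} {f : A ⟶ X} {g : B ⟶ X}

lemma ext_obj_of_isPullback (hpb : IsPullback fst snd f g) {p q : P}
    (h₁ : fst.toFunctor.obj p = fst.toFunctor.obj q)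
    (h₂ : snd.toFunctor.obj p = snd.toFunctor.obj q) : p = q :=
  Limits.Types.ext_of_isPullback (hpb.map Cat.objects) h₁ h₂

lemma exists_obj_of_isPullback (hpb : IsPullback fst snd f g) {a : A} {b : B}
    (h : f.toFunctor.obj a = g.toFunctor.obj b) :
    ∃ p, fst.toFunctor.obj p = a ∧ snd.toFunctor.obj p = b :=
  Limits.Types.exists_of_isPullback (hpb.map Cat.objects) a b h

lemma nonempty_hom_of_isPullback [Quiver.IsThin X] (hpb : IsPullback fst snd f g) {p q : P}
    (u : fst.toFunctor.obj p ⟶ fst.toFunctor.obj q)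
    (v : snd.toFunctor.obj p ⟶ snd.toFunctor.obj q) : Nonempty (p ⟶ q) := by
  have hw : arrowHom u ≫ f = arrowHom v ≫ g := by
    refine Hom.ext_of_isThin fun ⟨i⟩ => ?_
    have hsq := Functor.congr_obj (congrArg Hom.toFunctor hpb.w)
    fin_cases i
    · exact hsq p
    · exact hsq q
  let L := hpb.lift _ _ hw
  have hL_fst := Functor.congr_obj (congrArg Hom.toFunctor (hpb.lift_fst _ _ hw))
  have hL_snd := Functor.congr_obj (congrArg Hom.toFunctor (hpb.lift_snd _ _ hw))
  have hL₀ : L.toFunctor.obj (AsSmall.up.obj 0) = p :=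
    ext_obj_of_isPullback hpb (hL_fst _) (hL_snd _)
  have hL₁ : L.toFunctor.obj (AsSmall.up.obj 1) = q :=
    ext_obj_of_isPullback hpb (hL_fst _) (hL_snd _)
  exact ⟨eqToHom hL₀.symm ≫ L.toFunctor.map (AsSmall.up.map (homOfLE zero_le_one)) ≫
    eqToHom hL₁⟩

noncomputable def liftObjOfIsPullback (hpb : IsPullback fst snd f g) {a : A} {b : B}
    (h : f.toFunctor.obj a = g.toFunctor.obj b) : P :=
  (exists_obj_of_isPullback hpb h).choose

lemma fst_liftObjOfIsPullback (hpb : IsPullback fst snd f g) {a : A} {b : B}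
    (h : f.toFunctor.obj a = g.toFunctor.obj b) :
    fst.toFunctor.obj (liftObjOfIsPullback hpb h) = a :=
  (exists_obj_of_isPullback hpb h).choose_spec.1

lemma snd_liftObjOfIsPullback (hpb : IsPullback fst snd f g) {a : A} {b : B}
    (h : f.toFunctor.obj a = g.toFunctor.obj b) :
    snd.toFunctor.obj (liftObjOfIsPullback hpb h) = b :=
  (exists_obj_of_isPullback hpb h).choose_spec.2

end CategoryTheory.Cat

section

open Cat

variable {P A B X : Cat.{u, u}} {fst : P ⟶ A} {snd : P ⟶ B} {f : A ⟶ X} {g : B ⟶ X}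
  {W : Cat.{u, u}}

lemma preordReflection_hom_ext (hpb : IsPullback fst snd f g) {m m' : W ⟶ preordReflection.obj P}
    (h₁ : m ≫ preordReflection.map fst = m' ≫ preordReflection.map fst)
    (h₂ : m ≫ preordReflection.map snd = m' ≫ preordReflection.map snd) : m = m' :=
  Hom.ext_of_isThin fun x => congrArg ThinObj.mk <| ext_obj_of_isPullback hpb
    (congrArg ThinObj.obj (Functor.congr_obj (congrArg Hom.toFunctor h₁) x))
    (congrArg ThinObj.obj (Functor.congr_obj (congrArg Hom.toFunctor h₂) x))

lemma preordReflection_obj_eq_of_comp_eq {F : W ⟶ preordReflection.obj A}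
    {G : W ⟶ preordReflection.obj B}
    (hFG : F ≫ preordReflection.map f = G ≫ preordReflection.map g) (x : W) :
    f.toFunctor.obj (F.toFunctor.obj x).obj = g.toFunctor.obj (G.toFunctor.obj x).obj :=
  congrArg ThinObj.obj (Functor.congr_obj (congrArg Hom.toFunctor hFG) x)

variable [Quiver.IsThin X] (hpb : IsPullback fst snd f g)
  (F : W ⟶ preordReflection.obj A) (G : W ⟶ preordReflection.obj B)
  (hFG : F ≫ preordReflection.map f = G ≫ preordReflection.map g)

noncomputable def preordReflectionLift : W ⟶ preordReflection.obj P :=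
  Functor.toCatHom (C := W) (D := ThinObj P)
    { obj x := ⟨liftObjOfIsPullback hpb (preordReflection_obj_eq_of_comp_eq hFG x)⟩
      map {x y} m := homOfLE <| by
        obtain ⟨u⟩ := ThinObj.nonempty_hom_obj (F.toFunctor.map m)
        obtain ⟨v⟩ := ThinObj.nonempty_hom_obj (G.toFunctor.map m)
        have hx := preordReflection_obj_eq_of_comp_eq hFG x
        have hy := preordReflection_obj_eq_of_comp_eq hFG y
        exact nonempty_hom_of_isPullback hpb
          (eqToHom (fst_liftObjOfIsPullback hpb hx) ≫ u ≫
            eqToHom (fst_liftObjOfIsPullback hpb hy).symm)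
          (eqToHom (snd_liftObjOfIsPullback hpb hx) ≫ v ≫
            eqToHom (snd_liftObjOfIsPullback hpb hy).symm)
      map_id _ := Subsingleton.elim _ _
      map_comp _ _ := Subsingleton.elim _ _ }

lemma preordReflectionLift_fst :
    preordReflectionLift hpb F G hFG ≫ preordReflection.map fst = F :=
  Hom.ext_of_isThin fun x =>
    congrArg ThinObj.mk (fst_liftObjOfIsPullback hpb (preordReflection_obj_eq_of_comp_eq hFG x))

lemma preordReflectionLift_snd :
    preordReflectionLift hpb F G hFG ≫ preordReflection.map snd = G :=
  Hom.ext_of_isThin fun x =>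
    congrArg ThinObj.mk (snd_liftObjOfIsPullback hpb (preordReflection_obj_eq_of_comp_eq hFG x))

end

/-- Theorem: the reflection of `Cat` into `Preord` has stable units: the reflector
preserves every pullback of small categories whose lower-right corner is a preorder
(a thin category). -/
theorem preordReflection_stable_units
    {P A B X : Cat.{u, u}} (fst : P ⟶ A) (snd : P ⟶ B) (f : A ⟶ X) (g : B ⟶ X)
    (hthin : Quiver.IsThin X)
    (hpb : IsPullback fst snd f g) :
    IsPullback (preordReflection.map fst) (preordReflection.map snd)
      (preordReflection.map f) (preordReflection.map g) := by
  have comm : preordReflection.map fst ≫ preordReflection.map f =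
      preordReflection.map snd ≫ preordReflection.map g := by
    rw [← Functor.map_comp, ← Functor.map_comp, hpb.w]
  refine IsPullback.of_isLimit' ⟨comm⟩ <| PullbackCone.IsLimit.mk _
    (fun s => preordReflectionLift hpb s.fst s.snd s.condition)
    (fun s => preordReflectionLift_fst hpb s.fst s.snd s.condition)
    (fun s => preordReflectionLift_snd hpb s.fst s.snd s.condition)
    fun s m h₁ h₂ => preordReflection_hom_ext hpb
      (h₁.trans (preordReflectionLift_fst hpb s.fst s.snd s.condition).symm)
      (h₂.trans (preordReflectionLift_snd hpb s.fst s.snd s.condition).symm)
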